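/- Let w be the facility location profile output by the ((3 − √5)/2, 1)-Quantile mechanism on an instance. Then for every facility location profile o of that instance, MoA(w) ≤ (2 + √5) · MoA(o). In particular, the distortion of the ((3 − √5)/2, 1)-Quantile mechanism under the Max-of-Average cost is at most 2 + √5. -/

import Mathlib

noncomputable section

/-- Max-variant individual cost of an agent at `x` under facility profile `w`. -/
def fcost (x : ℝ) (w : ℝ × ℝ) : ℝ := max |x - w.1| |x - w.2|

/-- `w` is a facility location profile for the candidate multiset `A`:
its first slot is an element of `A` and its second slot is an element of `A`
with one copy of the first slot removed. -/
def IsProfile (A : Multiset ℝ) (w : ℝ × ℝ) : Prop :=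
  w.1 ∈ A ∧ w.2 ∈ A.erase w.1

/-- Canonical closest element of the multiset `A` to `p` (ties broken to the smaller). -/
def closest (A : Multiset ℝ) (p : ℝ) : ℝ :=
  if h : A.toFinset.Nonempty then
    (A.toFinset.filter fun a => ∀ b ∈ A.toFinset, |p - a| ≤ |p - b|).min'
      (by
        obtain ⟨a, ha, hmin⟩ := A.toFinset.exists_min_image (fun a => |p - a|) h
        exact ⟨a, Finset.mem_filter.mpr ⟨ha, hmin⟩⟩)
  else 0

/-- The `⌈γ · |S|⌉`-th leftmost element of the multiset `S` (the leftmost when `γ = 0`). -/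
def qSel (S : Multiset ℝ) (γ : ℝ) : ℝ :=
  (S.sort (· ≤ ·)).getD (⌈γ * (Multiset.card S : ℝ)⌉.toNat - 1) 0

/-- Multiset of locations of the agents of group `d`. -/
def groupLocs {n k : ℕ} (group : Fin n → Fin k) (x : Fin n → ℝ) (d : Fin k) : Multiset ℝ :=
  ((Finset.univ.filter fun i => group i = d).val).map x

/-- The (α,β)-Quantile mechanism: for each group `d` the representatives are the two
candidate locations closest to the ⌈α·n_d⌉-th leftmost agent of the group, and the two
facilities are chosen among the representatives by the ⌈β·k⌉-th leftmost rule. -/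
def quantileMech (A : Multiset ℝ) (α β : ℝ) {n k : ℕ}
    (group : Fin n → Fin k) (x : Fin n → ℝ) : ℝ × ℝ :=
  let y1 : Fin k → ℝ := fun d => closest A (qSel (groupLocs group x d) α)
  let y2 : Fin k → ℝ := fun d => closest (A.erase (y1 d)) (qSel (groupLocs group x d) α)
  let w1 : ℝ := qSel (Finset.univ.val.map y1) β
  let w2 : ℝ := qSel (Finset.univ.val.map fun d => if y1 d = w1 then y2 d else y1 d) β
  (w1, w2)

/-- Max-of-Average cost. -/
def MoA {n k : ℕ} (group : Fin n → Fin k) (x : Fin n → ℝ) (w : ℝ × ℝ) : ℝ :=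
  ⨆ d : Fin k,
    (1 / (((Finset.univ.filter fun i => group i = d).card : ℝ))) *
      ∑ i ∈ Finset.univ.filter (fun i => group i = d), fcost (x i) w

/-!
Let `m` and `r` be the midpoint and half-width of `o`, so that an agent at `p` pays `|p - m| + r`
under `o`, and every representative `y` of a group with α-quantile `q` satisfies
`|q - y| ≤ |q - m| + r`. Markov's inequality on the agents on either side of `q` gives
`(1 - α) (q - m) ≤ MoA o` and `α (m - q) ≤ MoA o`. For `β = 1` both facilities are maxima of
representatives, hence at most `r + (1 + √5) MoA o` to the right of `m`. Either the first facility
comes from a group with `q ≥ m`, and then both facilities lie right of `m - r`; or neither facility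
exceeds `m + r`, and then within each group only the agents right of its quantile, a
`(1 - α)`-fraction, pay more than `|p - m| + r`, by at most `2 (m - q)`. Either way every group's
average cost exceeds its cost under `o` by at most `(1 + √5) MoA o`.
-/

open Finset Set

lemma Multiset.ne_zero_of_mem {α : Type*} {s : Multiset α} {a : α} (ha : a ∈ s) : s ≠ 0 :=
  Multiset.card_pos.1 (Multiset.card_pos_iff_exists_mem.2 ⟨a, ha⟩)

lemma List.length_le_countP_of_sublist {α : Type*} {l l' : List α} {p : α → Bool}
    (h : l'.Sublist l) (hp : ∀ b ∈ l', p b) : l'.length ≤ l.countP p :=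
  List.countP_eq_length.2 hp ▸ h.countP_le

section SortedList

variable {α : Type*} [LinearOrder α] {l : List α} {j : ℕ}

lemma List.Pairwise.succ_le_countP_le_getElem (hl : l.Pairwise (· ≤ ·)) (hj : j < l.length) :
    j + 1 ≤ l.countP (fun b => b ≤ l[j]) := by
  have hlen : (l.take (j + 1)).length = j + 1 := by rw [List.length_take]; omega
  refine hlen ▸ List.length_le_countP_of_sublist (List.take_sublist _ _) fun b hb => ?_
  obtain ⟨i, hi, rfl⟩ := List.mem_iff_getElem.1 hb
  rw [hlen] at hi
  simpa using hl.rel_get_of_le (a := ⟨i, by omega⟩) (b := ⟨j, hj⟩) (Fin.mk_le_mk.2 (by omega))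

lemma List.Pairwise.length_sub_le_countP_getElem_le (hl : l.Pairwise (· ≤ ·))
    (hj : j < l.length) : l.length - j ≤ l.countP (fun b => l[j] ≤ b) := by
  refine List.length_drop ▸ List.length_le_countP_of_sublist (List.drop_sublist _ _) fun b hb => ?_
  obtain ⟨i, hi, rfl⟩ := List.mem_iff_getElem.1 hb
  rw [List.length_drop] at hi
  simpa using hl.rel_get_of_le (a := ⟨j, hj⟩) (b := ⟨j + i, by omega⟩) (Fin.mk_le_mk.2 (by omega))

end SortedList

section Quantile

variable {S : Multiset ℝ} {γ : ℝ}

lemma qSel_eq_getElem (hS : S ≠ 0) (hγ₀ : 0 ≤ γ) (hγ₁ : γ ≤ 1) :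
    ∃ j, ∃ hj : j < (S.sort (· ≤ ·)).length, qSel S γ = (S.sort (· ≤ ·))[j] ∧
      (j : ℝ) ≤ γ * Multiset.card S ∧ γ * Multiset.card S ≤ j + 1 := by
  have hcard : 0 < Multiset.card S := Multiset.card_pos.2 hS
  set c := ⌈γ * (Multiset.card S : ℝ)⌉
  have hc₀ : 0 ≤ c := Int.ceil_nonneg (by positivity)
  have hcS : c ≤ Multiset.card S := Int.ceil_le.2 (by push_cast; nlinarith)
  have hlt : c < γ * Multiset.card S + 1 := Int.ceil_lt_add_one _
  have hle : γ * Multiset.card S ≤ c := Int.le_ceil _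
  have hj : c.toNat - 1 < (S.sort (· ≤ ·)).length := by
    rw [Multiset.length_sort]; omega
  refine ⟨c.toNat - 1, hj, List.getD_eq_getElem _ 0 hj, ?_, ?_⟩
  · rcases Nat.eq_zero_or_pos (c.toNat - 1) with h | h
    · rw [h, Nat.cast_zero]; positivity
    · have : ((c.toNat - 1 : ℕ) : ℤ) = c - 1 := by omega
      have : ((c.toNat - 1 : ℕ) : ℝ) = c - 1 := by exact_mod_cast this
      linarith
  · have : (c : ℝ) ≤ ((c.toNat - 1 : ℕ) : ℝ) + 1 := by
      have : c ≤ ((c.toNat - 1 : ℕ) : ℤ) + 1 := by omega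
      exact_mod_cast this
    linarith

lemma qSel_mem (hS : S ≠ 0) (hγ₀ : 0 ≤ γ) (hγ₁ : γ ≤ 1) : qSel S γ ∈ S := by
  obtain ⟨j, hj, hq, -⟩ := qSel_eq_getElem hS hγ₀ hγ₁
  exact hq ▸ (Multiset.mem_sort _).1 (List.getElem_mem hj)

lemma mul_card_le_countP_le_qSel (hS : S ≠ 0) (hγ₀ : 0 ≤ γ) (hγ₁ : γ ≤ 1) :
    γ * Multiset.card S ≤ S.countP (· ≤ qSel S γ) := by
  obtain ⟨j, hj, hq, -, hjγ⟩ := qSel_eq_getElem hS hγ₀ hγ₁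
  have h := (S.pairwise_sort (· ≤ ·)).succ_le_countP_le_getElem hj
  rw [← hq, ← Multiset.coe_countP, Multiset.sort_eq] at h
  exact hjγ.trans (by exact_mod_cast h)

lemma one_sub_mul_card_le_countP_qSel_le (hS : S ≠ 0) (hγ₀ : 0 ≤ γ) (hγ₁ : γ ≤ 1) :
    (1 - γ) * Multiset.card S ≤ S.countP (qSel S γ ≤ ·) := by
  obtain ⟨j, hj, hq, hjγ, -⟩ := qSel_eq_getElem hS hγ₀ hγ₁
  have h := (S.pairwise_sort (· ≤ ·)).length_sub_le_countP_getElem_le hj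
  rw [← hq, ← Multiset.coe_countP, Multiset.sort_eq, Multiset.length_sort] at h
  have : (Multiset.card S : ℝ) - j ≤ S.countP (qSel S γ ≤ ·) := by
    rw [← Nat.cast_sub (by rw [Multiset.length_sort] at hj; omega)]
    exact_mod_cast h
  linarith

lemma le_qSel_one {v : ℝ} (hv : v ∈ S) : v ≤ qSel S 1 := by
  have h := mul_card_le_countP_le_qSel (Multiset.ne_zero_of_mem hv) zero_le_one le_rfl
  rw [one_mul, Nat.cast_le] at h
  exact Multiset.countP_eq_card.1 (le_antisymm (Multiset.countP_le_card _ _) h) v hv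

variable {ι : Type*}

lemma mul_card_le_card_filter_le_qSel (s : Finset ι) (f : ι → ℝ) (hs : s.Nonempty)
    (hγ₀ : 0 ≤ γ) (hγ₁ : γ ≤ 1) : γ * #s ≤ #{i ∈ s | f i ≤ qSel (s.val.map f) γ} := by
  have h := mul_card_le_countP_le_qSel (S := s.val.map f) (by simpa using hs.ne_empty) hγ₀ hγ₁
  rwa [Multiset.countP_map, Multiset.card_map] at h

lemma one_sub_mul_card_le_card_filter_qSel_le (s : Finset ι) (f : ι → ℝ) (hs : s.Nonempty)
    (hγ₀ : 0 ≤ γ) (hγ₁ : γ ≤ 1) : (1 - γ) * #s ≤ #{i ∈ s | qSel (s.val.map f) γ ≤ f i} := by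
  have h := one_sub_mul_card_le_countP_qSel_le (S := s.val.map f) (by simpa using hs.ne_empty)
    hγ₀ hγ₁
  rwa [Multiset.countP_map, Multiset.card_map] at h

lemma isGreatest_qSel_one_map [Fintype ι] [Nonempty ι] (f : ι → ℝ) :
    IsGreatest (range f) (qSel (univ.val.map f) 1) := by
  refine ⟨?_, ?_⟩
  · simpa using qSel_mem (S := univ.val.map f) (by simpa using Finset.univ_nonempty.ne_empty)
      zero_le_one le_rfl
  · rintro _ ⟨d, rfl⟩
    exact le_qSel_one (Multiset.mem_map_of_mem f (mem_univ d))

end Quantile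

section QuantileDeviation

variable {ι : Type*} {s : Finset ι}

lemma mul_le_of_card_filter_le {g : ι → ℝ} {p : ι → Prop} [DecidablePred p] {c t C : ℝ}
    (hs : s.Nonempty) (ht : 0 ≤ t) (hg : ∀ i ∈ s, 0 ≤ g i) (hp : ∀ i ∈ s, p i → t ≤ g i)
    (hcard : c * #s ≤ #{i ∈ s | p i}) (hsum : ∑ i ∈ s, g i ≤ #s * C) : c * t ≤ C := by
  have hpos : (0 : ℝ) < #s := by exact_mod_cast hs.card_pos
  refine le_of_mul_le_mul_left ?_ hpos
  calc #s * (c * t) = c * #s * t := by ring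
    _ ≤ #{i ∈ s | p i} * t := mul_le_mul_of_nonneg_right hcard ht
    _ ≤ ∑ i ∈ s with p i, g i := by
      rw [← nsmul_eq_mul]
      exact card_nsmul_le_sum _ _ _ fun i hi => hp i (mem_filter.1 hi).1 (mem_filter.1 hi).2
    _ ≤ ∑ i ∈ s, g i := sum_le_sum_of_subset_of_nonneg (filter_subset _ _) fun i hi _ => hg i hi
    _ ≤ #s * C := hsum

variable {f : ι → ℝ} {α m C : ℝ}

lemma one_sub_mul_max_qSel_sub_le (hs : s.Nonempty) (hα₀ : 0 ≤ α) (hα₁ : α ≤ 1)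
    (hsum : ∑ i ∈ s, |f i - m| ≤ #s * C) :
    (1 - α) * max (qSel (s.val.map f) α - m) 0 ≤ C :=
  mul_le_of_card_filter_le hs (le_max_right _ _) (fun _ _ => abs_nonneg _)
    (fun i _ hi => max_le (by linarith [le_abs_self (f i - m)]) (abs_nonneg _))
    (one_sub_mul_card_le_card_filter_qSel_le s f hs hα₀ hα₁) hsum

lemma mul_max_sub_qSel_le (hs : s.Nonempty) (hα₀ : 0 ≤ α) (hα₁ : α ≤ 1)
    (hsum : ∑ i ∈ s, |f i - m| ≤ #s * C) :
    α * max (m - qSel (s.val.map f) α) 0 ≤ C :=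
  mul_le_of_card_filter_le hs (le_max_right _ _) (fun _ _ => abs_nonneg _)
    (fun i _ hi => max_le (by linarith [neg_abs_le (f i - m)]) (abs_nonneg _))
    (mul_card_le_card_filter_le_qSel s f hs hα₀ hα₁) hsum

end QuantileDeviation

section Closest

variable {A : Multiset ℝ}

lemma closest_spec (hA : A ≠ 0) (p : ℝ) :
    closest A p ∈ A ∧ ∀ b ∈ A, |p - closest A p| ≤ |p - b| := by
  have h : A.toFinset.Nonempty := Multiset.toFinset_nonempty.2 hA
  unfold closest
  rw [dif_pos h]
  generalize_proofs hne
  have hmem := Finset.min'_mem _ hne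
  rw [Finset.mem_filter, Multiset.mem_toFinset] at hmem
  exact ⟨hmem.1, fun b hb => hmem.2 b (Multiset.mem_toFinset.2 hb)⟩

variable {o : ℝ × ℝ}

lemma abs_sub_closest_le_fcost (ho : IsProfile A o) (p : ℝ) :
    |p - closest A p| ≤ fcost p o :=
  ((closest_spec (Multiset.ne_zero_of_mem ho.1) p).2 o.1 ho.1).trans (le_max_left _ _)

/-- `o` uses two distinct slots of `A`, so one of them survives removing `closest A p`. -/
lemma abs_sub_closest_erase_le_fcost (ho : IsProfile A o) (p : ℝ) :
    |p - closest (A.erase (closest A p)) p| ≤ fcost p o := by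
  have ht := (closest_spec (Multiset.ne_zero_of_mem ho.1) p).1
  have hne : A.erase (closest A p) ≠ 0 := by
    rw [← Multiset.card_pos, Multiset.card_erase_of_mem ht, ← Multiset.card_erase_of_mem ho.1]
    exact Multiset.card_pos_iff_exists_mem.2 ⟨_, ho.2⟩
  have hle := (closest_spec hne p).2
  by_cases hot : o.1 = closest A p
  · exact (hle o.2 (hot ▸ ho.2)).trans (le_max_right _ _)
  · exact (hle o.1 ((Multiset.mem_erase_of_ne hot).2 ho.1)).trans (le_max_left _ _)

end Closest

lemma fcost_eq (x a b : ℝ) : fcost x (a, b) = |x - (a + b) / 2| + |a - b| / 2 := by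
  unfold fcost
  rcases abs_cases (x - a) with ⟨h₁, s₁⟩ | ⟨h₁, s₁⟩ <;>
  rcases abs_cases (x - b) with ⟨h₂, s₂⟩ | ⟨h₂, s₂⟩ <;>
  rcases abs_cases (a - b) with ⟨h₃, s₃⟩ | ⟨h₃, s₃⟩ <;>
  rcases abs_cases (x - (a + b) / 2) with ⟨h₄, s₄⟩ | ⟨h₄, s₄⟩ <;>
  simp only [h₁, h₂, h₃, h₄, max_def] <;> split_ifs <;> linarith

section Cost

variable {x y a m r U : ℝ} {w : ℝ × ℝ}

lemma fcost_le_of_mem_Icc {lo hi : ℝ} (h₁ : w.1 ∈ Icc lo hi) (h₂ : w.2 ∈ Icc lo hi) :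
    fcost x w ≤ max (x - lo) (hi - x) :=
  max_le (abs_sub_le_iff.2 ⟨by grind, by grind⟩) (abs_sub_le_iff.2 ⟨by grind, by grind⟩)

lemma mem_Icc_of_abs_sub_le (h : |a - y| ≤ |a - m| + r) :
    y ∈ Icc (m - r - 2 * max (m - a) 0) (m + r + 2 * max (a - m) 0) := by
  rw [abs_le] at h
  rcases le_total a m with ham | ham
  · rw [abs_of_nonpos (sub_nonpos.2 ham)] at h
    rw [max_eq_left (sub_nonneg.2 ham), max_eq_right (sub_nonpos.2 ham)]
    constructor <;> linarith [h.1, h.2]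
  · rw [abs_of_nonneg (sub_nonneg.2 ham)] at h
    rw [max_eq_right (sub_nonpos.2 ham), max_eq_left (sub_nonneg.2 ham)]
    constructor <;> linarith [h.1, h.2]

lemma fcost_le_of_mem_Icc_right (hU : 0 ≤ U) (h₁ : w.1 ∈ Icc (m - r) (m + r + U))
    (h₂ : w.2 ∈ Icc (m - r) (m + r + U)) : fcost x w ≤ |x - m| + r + U := by
  refine (fcost_le_of_mem_Icc h₁ h₂).trans (max_le ?_ ?_) <;>
  linarith [le_abs_self (x - m), neg_abs_le (x - m)]

lemma fcost_le_of_mem_Icc_left (h₁ : w.1 ∈ Icc (m - r - 2 * max (m - a) 0) (m + r))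
    (h₂ : w.2 ∈ Icc (m - r - 2 * max (m - a) 0) (m + r)) :
    fcost x w ≤ |x - m| + r + if x ≤ a then 0 else 2 * max (m - a) 0 := by
  refine (fcost_le_of_mem_Icc h₁ h₂).trans (max_le ?_ ?_)
  · split_ifs with hxa
    · rcases le_total a m with ham | ham
      · rw [max_eq_left (sub_nonneg.2 ham), abs_of_nonpos (by linarith)]
        linarith
      · rw [max_eq_right (sub_nonpos.2 ham)]
        linarith [le_abs_self (x - m)]
    · linarith [le_abs_self (x - m)]
  · have : 0 ≤ if x ≤ a then 0 else 2 * max (m - a) 0 := by positivity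
    linarith [neg_abs_le (x - m)]

lemma sum_fcost_le_of_bounds {ι : Type*} (s : Finset ι) (f : ι → ℝ) {α : ℝ}
    (hcount : α * #s ≤ #{i ∈ s | f i ≤ a}) (hU₀ : 0 ≤ U)
    (hU : 2 * (1 - α) * max (m - a) 0 ≤ U)
    (hlo : m - r - 2 * max (m - a) 0 ≤ w.1 ∧ m - r - 2 * max (m - a) 0 ≤ w.2)
    (hhi : w.1 ≤ m + r + U ∧ w.2 ≤ m + r + U)
    (hcase : (m - r ≤ w.1 ∧ m - r ≤ w.2) ∨ (w.1 ≤ m + r ∧ w.2 ≤ m + r)) :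
    ∑ i ∈ s, fcost (f i) w ≤ ∑ i ∈ s, (|f i - m| + r) + #s * U := by
  rcases hcase with hright | hleft
  · calc ∑ i ∈ s, fcost (f i) w ≤ ∑ i ∈ s, (|f i - m| + r + U) :=
          sum_le_sum fun i _ => fcost_le_of_mem_Icc_right hU₀ ⟨hright.1, hhi.1⟩ ⟨hright.2, hhi.2⟩
      _ = ∑ i ∈ s, (|f i - m| + r) + #s * U := by
          rw [sum_add_distrib, sum_const, nsmul_eq_mul]
  · set δ := max (m - a) 0
    -- only the agents right of `a`, at most a `(1 - α)`-fraction, pay the extra `2δ`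
    have hright : (#{i ∈ s | ¬f i ≤ a} : ℝ) ≤ (1 - α) * #s := by
      have : (#{i ∈ s | f i ≤ a} : ℝ) + #{i ∈ s | ¬f i ≤ a} = #s := by
        exact_mod_cast card_filter_add_card_filter_not _
      linarith
    calc ∑ i ∈ s, fcost (f i) w
        ≤ ∑ i ∈ s, (|f i - m| + r + if f i ≤ a then 0 else 2 * δ) :=
          sum_le_sum fun i _ => fcost_le_of_mem_Icc_left ⟨hlo.1, hleft.1⟩ ⟨hlo.2, hleft.2⟩
      _ = ∑ i ∈ s, (|f i - m| + r) + #{i ∈ s | ¬f i ≤ a} * (2 * δ) := by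
          rw [sum_add_distrib, sum_ite, sum_const_zero, zero_add, sum_const, nsmul_eq_mul]
      _ ≤ ∑ i ∈ s, (|f i - m| + r) + #s * U := by
          have : (#{i ∈ s | ¬f i ≤ a} : ℝ) * (2 * δ) ≤ (1 - α) * #s * (2 * δ) :=
            mul_le_mul_of_nonneg_right hright (by positivity)
          nlinarith

end Cost

section MaxOfAverage

variable {n k : ℕ} (group : Fin n → Fin k) (x : Fin n → ℝ) (w : ℝ × ℝ)

lemma MoA_nonneg : 0 ≤ MoA group x w :=
  Real.iSup_nonneg fun (_ : Fin k) =>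
    mul_nonneg (by positivity) (sum_nonneg fun i _ => (abs_nonneg _).trans (le_max_left _ _))

lemma sum_fcost_le_card_mul_MoA (d : Fin k) :
    ∑ i with group i = d, fcost (x i) w ≤ #{i | group i = d} * MoA group x w := by
  rcases Nat.eq_zero_or_pos #{i | group i = d} with h | h
  · simp [Finset.card_eq_zero.1 h]
  · rw [← div_le_iff₀' (by positivity), div_eq_inv_mul, ← one_div]
    exact le_ciSup
      (f := fun d => 1 / (#{i | group i = d} : ℝ) * ∑ i with group i = d, fcost (x i) w)
      (Finite.bddAbove_range _) d

lemma MoA_le_of_forall_sum_le {C : ℝ} (hC : 0 ≤ C)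
    (h : ∀ d, ∑ i with group i = d, fcost (x i) w ≤ #{i | group i = d} * C) :
    MoA group x w ≤ C := by
  refine Real.iSup_le (fun d => ?_) hC
  rcases Nat.eq_zero_or_pos #{i | group i = d} with h₀ | h₀
  · simp [h₀, hC]
  · rw [one_div, inv_mul_le_iff₀ (by positivity)]
    exact h d

end MaxOfAverage

section MaxSelect

variable {ι : Type*} [Fintype ι] (y₁ y₂ : ι → ℝ)

/-- `quantileMech A α 1 group x` is definitionally `maxSelect` of the groups' two
representatives. -/
def maxSelect : ℝ × ℝ :=
  (qSel (univ.val.map y₁) 1,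
    qSel (univ.val.map fun d => if y₁ d = qSel (univ.val.map y₁) 1 then y₂ d else y₁ d) 1)

variable [Nonempty ι]

lemma isGreatest_maxSelect_fst : IsGreatest (range y₁) (maxSelect y₁ y₂).1 :=
  isGreatest_qSel_one_map y₁

lemma isGreatest_maxSelect_snd :
    IsGreatest (range fun d => if y₁ d = (maxSelect y₁ y₂).1 then y₂ d else y₁ d)
      (maxSelect y₁ y₂).2 :=
  isGreatest_qSel_one_map _

variable {y₁ y₂}

lemma le_maxSelect {L : ℝ} (e : ι) (h : L ≤ y₁ e ∧ L ≤ y₂ e) :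
    L ≤ (maxSelect y₁ y₂).1 ∧ L ≤ (maxSelect y₁ y₂).2 := by
  refine ⟨h.1.trans ((isGreatest_maxSelect_fst y₁ y₂).2 ⟨e, rfl⟩),
    le_trans ?_ ((isGreatest_maxSelect_snd y₁ y₂).2 ⟨e, rfl⟩)⟩
  dsimp only
  split_ifs
  exacts [h.2, h.1]

lemma maxSelect_le {H : ℝ} (h : ∀ d, y₁ d ≤ H ∧ y₂ d ≤ H) :
    (maxSelect y₁ y₂).1 ≤ H ∧ (maxSelect y₁ y₂).2 ≤ H := by
  obtain ⟨d₁, hd₁⟩ := (isGreatest_maxSelect_fst y₁ y₂).1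
  obtain ⟨d₂, hd₂⟩ := (isGreatest_maxSelect_snd y₁ y₂).1
  refine ⟨hd₁ ▸ (h d₁).1, hd₂ ▸ ?_⟩
  dsimp only
  split_ifs
  exacts [(h d₂).2, (h d₂).1]

lemma maxSelect_dichotomy (P : ι → Prop) {L H : ℝ}
    (hP : ∀ d, P d → L ≤ y₁ d ∧ L ≤ y₂ d) (hnP : ∀ d, ¬P d → y₁ d ≤ H ∧ y₂ d ≤ H) :
    (L ≤ (maxSelect y₁ y₂).1 ∧ L ≤ (maxSelect y₁ y₂).2) ∨
      ((maxSelect y₁ y₂).1 ≤ H ∧ (maxSelect y₁ y₂).2 ≤ H) := by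
  have hfst := isGreatest_maxSelect_fst y₁ y₂
  have hsnd := isGreatest_maxSelect_snd y₁ y₂
  by_cases hcase : ∃ d, y₁ d = (maxSelect y₁ y₂).1 ∧ P d
  · obtain ⟨d, hd, hPd⟩ := hcase
    refine Or.inl ⟨hd ▸ (hP d hPd).1, (hP d hPd).2.trans ?_⟩
    simpa [hd] using hsnd.2 ⟨d, rfl⟩
  · push Not at hcase
    obtain ⟨d₁, hd₁⟩ := hfst.1
    have hw₁ : (maxSelect y₁ y₂).1 ≤ H := hd₁ ▸ (hnP d₁ (hcase d₁ hd₁)).1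
    obtain ⟨d₂, hd₂⟩ := hsnd.1
    refine Or.inr ⟨hw₁, hd₂ ▸ ?_⟩
    dsimp only
    split_ifs with h
    exacts [(hnP d₂ (hcase d₂ h)).2, (hfst.2 ⟨d₂, rfl⟩).trans hw₁]

end MaxSelect

lemma sum_fcost_maxSelect_le {ι κ : Type*} [Fintype ι] {y₁ y₂ q : ι → ℝ} (s : Finset κ)
    (f : κ → ℝ) {α m r U : ℝ} (e : ι)
    (hrep : ∀ d, |q d - y₁ d| ≤ |q d - m| + r ∧ |q d - y₂ d| ≤ |q d - m| + r)
    (hover : ∀ d, 2 * max (q d - m) 0 ≤ U) (hunder : 2 * (1 - α) * max (m - q e) 0 ≤ U)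
    (hcount : α * #s ≤ #{i ∈ s | f i ≤ q e}) (hU : 0 ≤ U) :
    ∑ i ∈ s, fcost (f i) (maxSelect y₁ y₂) ≤ ∑ i ∈ s, (|f i - m| + r) + #s * U := by
  have : Nonempty ι := ⟨e⟩
  have h₁ := fun d => mem_Icc_of_abs_sub_le (hrep d).1
  have h₂ := fun d => mem_Icc_of_abs_sub_le (hrep d).2
  refine sum_fcost_le_of_bounds s f hcount hU hunder (le_maxSelect e ⟨(h₁ e).1, (h₂ e).1⟩)
    (maxSelect_le fun d => ⟨(h₁ d).2.trans ?_, (h₂ d).2.trans ?_⟩)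
    (maxSelect_dichotomy (fun d => m ≤ q d) (fun d hd => ?_) fun d hd => ?_)
  · linarith [hover d]
  · linarith [hover d]
  · have := max_eq_right (sub_nonpos.2 hd)
    exact ⟨by linarith [(h₁ d).1], by linarith [(h₂ d).1]⟩
  · have := max_eq_right (sub_nonpos.2 (le_of_not_ge hd))
    exact ⟨by linarith [(h₁ d).2], by linarith [(h₂ d).2]⟩

section Mechanism

variable {A : Multiset ℝ} {α K : ℝ} {n k : ℕ} {group : Fin n → Fin k} {x : Fin n → ℝ}
  {o : ℝ × ℝ}

lemma sum_fcost_quantileMech_le (hα₀ : 0 ≤ α) (hα₁ : α ≤ 1) (hK₁ : 2 ≤ (1 - α) * K)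
    (hK₂ : 2 * (1 - α) ≤ α * K) (hgrp : ∀ d, ∃ i, group i = d) (ho : IsProfile A o)
    (e : Fin k) :
    ∑ i with group i = e, fcost (x i) (quantileMech A α 1 group x) ≤
      #{i | group i = e} * ((1 + K) * MoA group x o) := by
  have hK : 0 ≤ K := by nlinarith
  set m := (o.1 + o.2) / 2
  set r := |o.1 - o.2| / 2
  have hr : 0 ≤ r := by positivity
  set OPT := MoA group x o
  set q : Fin k → ℝ := fun d => qSel (groupLocs group x d) α
  have hfo : ∀ p, fcost p o = |p - m| + r := fun p => fcost_eq p o.1 o.2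
  have hN : ∀ d, ({i | group i = d} : Finset (Fin n)).Nonempty := fun d =>
    let ⟨i, hi⟩ := hgrp d; ⟨i, by simpa using hi⟩
  have hsum : ∀ d, ∑ i with group i = d, |x i - m| ≤ #{i | group i = d} * OPT := fun d =>
    (sum_le_sum fun i _ => by rw [hfo]; linarith).trans (sum_fcost_le_card_mul_MoA group x o d)
  have hover : ∀ d, 2 * max (q d - m) 0 ≤ K * OPT := fun d => by
    have h : (1 - α) * max (q d - m) 0 ≤ OPT :=
      one_sub_mul_max_qSel_sub_le (hN d) hα₀ hα₁ (hsum d)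
    nlinarith [mul_le_mul_of_nonneg_right hK₁ (le_max_right (q d - m) 0)]
  have hunder : 2 * (1 - α) * max (m - q e) 0 ≤ K * OPT := by
    have h : α * max (m - q e) 0 ≤ OPT := mul_max_sub_qSel_le (hN e) hα₀ hα₁ (hsum e)
    nlinarith [mul_le_mul_of_nonneg_right hK₂ (le_max_right (m - q e) 0)]
  calc ∑ i with group i = e, fcost (x i) (quantileMech A α 1 group x)
      ≤ ∑ i with group i = e, (|x i - m| + r) + #{i | group i = e} * (K * OPT) :=
        sum_fcost_maxSelect_le _ x e
          (fun d => ⟨hfo _ ▸ abs_sub_closest_le_fcost ho (q d),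
            hfo _ ▸ abs_sub_closest_erase_le_fcost ho (q d)⟩)
          hover hunder (mul_card_le_card_filter_le_qSel _ x (hN e) hα₀ hα₁)
          (mul_nonneg hK (MoA_nonneg group x o))
    _ = ∑ i with group i = e, fcost (x i) o + #{i | group i = e} * (K * OPT) := by
        simp only [hfo]
    _ ≤ #{i | group i = e} * OPT + #{i | group i = e} * (K * OPT) := by
        gcongr; exact sum_fcost_le_card_mul_MoA group x o e
    _ = #{i | group i = e} * ((1 + K) * OPT) := by ring

theorem MoA_quantileMech_one_le (hα₀ : 0 ≤ α) (hα₁ : α ≤ 1) (hK₁ : 2 ≤ (1 - α) * K)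
    (hK₂ : 2 * (1 - α) ≤ α * K) (hgrp : ∀ d, ∃ i, group i = d) (ho : IsProfile A o) :
    MoA group x (quantileMech A α 1 group x) ≤ (1 + K) * MoA group x o :=
  MoA_le_of_forall_sum_le group x _ (mul_nonneg (by nlinarith) (MoA_nonneg group x o))
    fun e => sum_fcost_quantileMech_le hα₀ hα₁ hK₁ hK₂ hgrp ho e

end Mechanism

theorem quantileMech_MoA_distortion_golden_general
    (A : Multiset ℝ) (n k : ℕ)
    (group : Fin n → Fin k) (hgrp : ∀ d : Fin k, ∃ i : Fin n, group i = d)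
    (x : Fin n → ℝ) (o : ℝ × ℝ) (ho : IsProfile A o) :
    MoA group x (quantileMech A ((3 - Real.sqrt 5) / 2) 1 group x) ≤
      (2 + Real.sqrt 5) * MoA group x o := by
  have h5 : Real.sqrt 5 ^ 2 = 5 := Real.sq_sqrt (by norm_num)
  have h1 : 1 ≤ Real.sqrt 5 := Real.one_le_sqrt.2 (by norm_num)
  have h3 : Real.sqrt 5 ≤ 3 := Real.sqrt_le_iff.2 ⟨by norm_num, by norm_num⟩
  rw [show 2 + Real.sqrt 5 = 1 + (1 + Real.sqrt 5) by ring]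
  -- both constraints on `K` hold with equality at `α = (3 - √5) / 2`, `K = 1 + √5`
  exact MoA_quantileMech_one_le (by linarith) (by linarith) (by nlinarith) (by nlinarith) hgrp ho

/-- For the Max-of-Average cost, the distortion of the ((3-√5)/2,1)-Quantile mechanism
is at most 2 + √5. -/
theorem quantileMech_MoA_distortion_golden
    (A : Multiset ℝ) (hA : 2 ≤ Multiset.card A)
    (n k : ℕ) (hn : 0 < n) (hk : 0 < k)
    (group : Fin n → Fin k) (hgrp : ∀ d : Fin k, ∃ i : Fin n, group i = d)
    (x : Fin n → ℝ) (o : ℝ × ℝ) (ho : IsProfile A o) :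
    MoA group x (quantileMech A ((3 - Real.sqrt 5) / 2) 1 group x) ≤
      (2 + Real.sqrt 5) * MoA group x o :=
  quantileMech_MoA_distortion_golden_general A n k group hgrp x o ho

end
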